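/- Let Z: K → ℂ[m] be of the form Z(u)(m) = Σ_{d=0}^3 ρ_d I_d(u) m^d, where I_d: K → ℝ are additive functionals and the ρ_d ∈ ℂ* satisfy that r_{ij} − r_{ji} ≠ 0 for all i ≠ j, where r_{ij} = Re(ρ_i)Im(ρ_j). Suppose E, F ∈ K satisfy Im Z(E) Re Z(F) − Re Z(E) Im Z(F) = 0 identically as polynomials in m, and I₃(E) ≠ 0. Then I₃(E) I_d(F) = I₃(F) I_d(E) for d = 0, 1, 2. -/

import Mathlib

/-!
The polynomial `p` is `m ↦ Im (Z(E)(m) · conj Z(F)(m))`, whose coefficient of `m^k` is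
`∑_{i+j=k} Im (ρ_i conj ρ_j) I_i(E) I_j(F)`. Since `Im (ρ_i conj ρ_j)` is antisymmetric in `(i, j)`
and nonzero off the diagonal, the coefficients of `m^5` and `m^4` force the minors
`I₃(E) I_d(F) - I₃(F) I_d(E)` to vanish for `d = 2, 1`. Together with `I₃(E) ≠ 0` these make the
`(1, 2)` minor vanish, so the coefficient of `m^3` reduces to the `(0, 3)` minor.
-/

open Finset Polynomial ComplexConjugate

theorem Polynomial.sum_filter_eq_zero_of_forall_sum_mul_pow_eq_zero {R ι : Type*} [CommRing R]
    [IsDomain R] [Infinite R] (s : Finset ι) (c : ι → R) (e : ι → ℕ)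
    (h : ∀ x : R, ∑ i ∈ s, c i * x ^ e i = 0) (k : ℕ) :
    ∑ i ∈ s with e i = k, c i = 0 := by
  have hp : ∑ i ∈ s, C (c i) * X ^ e i = 0 :=
    Polynomial.funext fun x => by simpa [eval_finsetSum] using h x
  simpa [finsetSum_coeff, coeff_C_mul_X_pow, sum_filter, eq_comm] using congrArg (coeff · k) hp

theorem Complex.im_mul_conj (z w : ℂ) : (z * conj w).im = z.im * w.re - z.re * w.im := by
  simp only [mul_im, conj_re, conj_im]; ring

theorem Complex.im_mul_re_sub_re_mul_im_sum {ι : Type*} (s : Finset ι) (ρ : ι → ℂ) (a b : ι → ℝ)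
    (e : ι → ℕ) (x : ℝ) :
    (∑ i ∈ s, ρ i * a i * (x : ℂ) ^ e i).im * (∑ j ∈ s, ρ j * b j * (x : ℂ) ^ e j).re -
      (∑ i ∈ s, ρ i * a i * (x : ℂ) ^ e i).re * (∑ j ∈ s, ρ j * b j * (x : ℂ) ^ e j).im =
    ∑ ij ∈ s ×ˢ s, (ρ ij.1 * conj (ρ ij.2)).im * a ij.1 * b ij.2 * x ^ (e ij.1 + e ij.2) := by
  rw [← im_mul_conj, map_sum, sum_mul_sum, ← sum_product', im_sum]
  refine sum_congr rfl fun ij _ => ?_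
  have : ρ ij.1 * a ij.1 * x ^ e ij.1 * conj (ρ ij.2 * b ij.2 * x ^ e ij.2) =
      ρ ij.1 * conj (ρ ij.2) * ↑(a ij.1 * b ij.2 * x ^ (e ij.1 + e ij.2)) := by
    simp only [map_mul, map_pow, conj_ofReal]; push_cast; ring
  rw [this, im_mul_ofReal]; ring

open Finset in
theorem stmt10_general {K : Type*} [AddCommGroup K] (ρ : Fin 4 → ℂ) (I : Fin 4 → K →+ ℝ)
    (hr : ∀ i j : Fin 4, i ≠ j →
      (ρ i).re * (ρ j).im - (ρ j).re * (ρ i).im ≠ 0)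
    (E F : K)
    (hEF : ∀ m : ℝ,
      (∑ d : Fin 4, ρ d * (I d E : ℂ) * (m : ℂ) ^ (d : ℕ)).im *
        (∑ d : Fin 4, ρ d * (I d F : ℂ) * (m : ℂ) ^ (d : ℕ)).re -
      (∑ d : Fin 4, ρ d * (I d E : ℂ) * (m : ℂ) ^ (d : ℕ)).re *
        (∑ d : Fin 4, ρ d * (I d F : ℂ) * (m : ℂ) ^ (d : ℕ)).im = 0)
    (h3 : I 3 E ≠ 0) :
    ∀ d : Fin 4, d ≠ 3 → I 3 E * I d F = I 3 F * I d E := by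
  have hcoeff := Polynomial.sum_filter_eq_zero_of_forall_sum_mul_pow_eq_zero _ _ _ fun m =>
    (Complex.im_mul_re_sub_re_mul_im_sum univ ρ (I · E) (I · F) Fin.val m).symm.trans (hEF m)
  have c5 := hcoeff 5
  have c4 := hcoeff 4
  have c3 := hcoeff 3
  simp only [sum_filter, sum_product, Fin.sum_univ_four, Complex.im_mul_conj] at c5 c4 c3
  norm_num at c5 c4 c3
  have e2 : I 3 E * I 2 F = I 3 F * I 2 E :=
    mul_left_cancel₀ (hr 2 3 (by decide)) (by linear_combination c5)
  have e1 : I 3 E * I 1 F = I 3 F * I 1 E :=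
    mul_left_cancel₀ (hr 1 3 (by decide)) (by linear_combination c4)
  have e12 : I 1 E * I 2 F = I 2 E * I 1 F :=
    mul_left_cancel₀ h3 (by linear_combination I 1 E * e2 - I 2 E * e1)
  have e0 : I 3 E * I 0 F = I 3 F * I 0 E :=
    mul_left_cancel₀ (hr 0 3 (by decide))
      (by linear_combination c3 - ((ρ 1).im * (ρ 2).re - (ρ 1).re * (ρ 2).im) * e12)
  intro d hd
  fin_cases d
  exacts [e0, e1, e2, absurd rfl hd]

open Finset in
/-- Let `Z : K → ℂ[m]` be given by `Z(u)(m) = Σ_{d=0}^{3} ρ_d I_d(u) m^d`,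
where the `I_d : K → ℝ` are additive and the nonzero complex numbers `ρ_d` are pairwise
non-collinear over `ℝ` (i.e. `r_{ij} - r_{ji} ≠ 0` for `i ≠ j`, where `r_{ij} = Re ρ_i · Im ρ_j`).
If `E, F ∈ K` satisfy `Im Z(E) · Re Z(F) - Re Z(E) · Im Z(F) = 0` identically in `m`, and
`I₃(E) ≠ 0`, then `I₃(E) I_d(F) = I₃(F) I_d(E)` for `d = 0, 1, 2`. -/
theorem stmt10 {K : Type*} [AddCommGroup K] (ρ : Fin 4 → ℂ) (I : Fin 4 → K →+ ℝ)
    (hρ : ∀ d, ρ d ≠ 0)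
    (hr : ∀ i j : Fin 4, i ≠ j →
      (ρ i).re * (ρ j).im - (ρ j).re * (ρ i).im ≠ 0)
    (E F : K)
    (hEF : ∀ m : ℝ,
      (∑ d : Fin 4, ρ d * (I d E : ℂ) * (m : ℂ) ^ (d : ℕ)).im *
        (∑ d : Fin 4, ρ d * (I d F : ℂ) * (m : ℂ) ^ (d : ℕ)).re -
      (∑ d : Fin 4, ρ d * (I d E : ℂ) * (m : ℂ) ^ (d : ℕ)).re *
        (∑ d : Fin 4, ρ d * (I d F : ℂ) * (m : ℂ) ^ (d : ℕ)).im = 0)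
    (h3 : I 3 E ≠ 0) :
    ∀ d : Fin 4, d ≠ 3 → I 3 E * I d F = I 3 F * I d E :=
  stmt10_general ρ I hr E F hEF h3
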